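/- arXiv:0710.2932 — 2 statements merged into one kernel-verified Lean document; each statement's English description precedes it below -/
import Mathlib

section
/- The unique positive distinguished subexpression for v ≤ w inside a reduced word s_{i_1}...s_{i_n} for w can be constructed greedily from the right: with v_{(n)} = v, set t_j = s_{i_j} if v_{(j)} s_{i_j} < v_{(j)} in Bruhat order, and t_j = 1 otherwise, where v_{(j-1)} = v_{(j)} t_j^{-1}. -/
/-!
Going down from `v_(n) = v`, the greedy choice keeps `v_(j)` a product of a subword of
`s_{i_1} ⋯ s_{i_j}`: whenever the subword disagrees with the greedy choice at the last letter,
the strong exchange property deletes some other letter instead. At `j = 0` this forces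
`v_(0) = 1`, and positivity is immediate from the greedy rule. The induction starts because `v ≤ w` makes `v` a
subword product of every word for `w`, not just of one reduced word: both descriptions are compared
with Björner–Brenti's chain definition of the Bruhat order, using the lifting property and again
strong exchange. Strong exchange itself comes from the reflection sign cocycle: `W` acts on
reflections with signs, each simple reflection conjugating and flipping the sign at itself, and
the Coxeter relations hold for this action because in a dihedral subgroup every sign flip
occurs an even number of times.
-/

/-- The Bruhat order on a Coxeter group, via the subword property. -/
def BruhatLE {B W : Type*} [Group W] {M : CoxeterMatrix B}
    (cs : CoxeterSystem M W) (v w : W) : Prop :=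
  ∃ ω : List B, cs.IsReduced ω ∧ cs.wordProd ω = w ∧
    ∃ ω' : List B, ω'.Sublist ω ∧ cs.IsReduced ω' ∧ cs.wordProd ω' = v

section ConjSign

open Finset

open scoped Classical

variable {G : Type*} [Group G]

theorem mul_mul_inv_eq_iff_eq_inv_mul_mul (a w z : G) : a * w * a⁻¹ = z ↔ w = a⁻¹ * z * a := by
  constructor <;> rintro rfl <;> group

/-- On reflections this is the action of `W` on `T × {±1}` of Björner–Brenti, §1.4; keeping all
of `G` as first factor avoids a subtype. -/
noncomputable def conjSignFun (x : G) (p : G × ZMod 2) : G × ZMod 2 :=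
  (x * p.1 * x⁻¹, p.2 + if p.1 = x then 1 else 0)

theorem conjSignFun_involutive {x : G} (hx : x * x = 1) :
    Function.Involutive (conjSignFun x) := by
  have hinv : x⁻¹ = x := inv_eq_of_mul_eq_one_right hx
  rintro ⟨w, e⟩
  have hfix : x * w * x⁻¹ = x ↔ w = x := by
    rw [mul_mul_inv_eq_iff_eq_inv_mul_mul, hinv, hx, one_mul]
  simp only [conjSignFun, hfix, Prod.mk.injEq]
  refine ⟨?_, ?_⟩
  · rw [show x * (x * w * x⁻¹) * x⁻¹ = x * x * w * (x * x)⁻¹ by group, hx]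
    group
  split_ifs <;> simp [add_assoc, CharTwo.add_self_eq_zero]

noncomputable def conjSignPerm {x : G} (hx : x * x = 1) : Equiv.Perm (G × ZMod 2) :=
  (conjSignFun_involutive hx).toPerm

theorem conjSignPerm_apply {x : G} (hx : x * x = 1) (w : G) (e : ZMod 2) :
    conjSignPerm hx (w, e) = (x * w * x⁻¹, e + if w = x then 1 else 0) := rfl

theorem conjSignPerm_mul_pow_apply {x y : G} (hx : x * x = 1) (hy : y * y = 1) (k : ℕ)
    (w : G) (e : ZMod 2) :
    ((conjSignPerm hx * conjSignPerm hy) ^ k) (w, e) =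
      ((x * y) ^ k * w * ((x * y) ^ k)⁻¹,
        e + ∑ l ∈ range (2 * k), if w = (y * x) ^ l * y then 1 else 0) := by
  have hxy : (x * y)⁻¹ = y * x := by
    rw [mul_inv_rev, inv_eq_of_mul_eq_one_right hx, inv_eq_of_mul_eq_one_right hy]
  have hshift (w : G) (l : ℕ) :
      x * (y * w * y⁻¹) * x⁻¹ = (y * x) ^ l * y ↔ w = (y * x) ^ (2 + l) * y := by
    rw [show x * (y * w * y⁻¹) * x⁻¹ = x * y * w * (x * y)⁻¹ by group,
      mul_mul_inv_eq_iff_eq_inv_mul_mul, hxy, add_comm, pow_succ, pow_succ']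
    simp only [mul_assoc]
  induction k generalizing w e with
  | zero => simp
  | succ k ih =>
    have hfix : y * w * y⁻¹ = x ↔ w = (y * x) ^ 1 * y := by
      rw [mul_mul_inv_eq_iff_eq_inv_mul_mul, pow_one, inv_eq_of_mul_eq_one_right hy, mul_assoc]
    rw [pow_succ, Equiv.Perm.mul_apply, Equiv.Perm.mul_apply, conjSignPerm_apply,
      conjSignPerm_apply, ih, show 2 * (k + 1) = 2 + 2 * k by ring, sum_range_add]
    simp only [hshift, hfix, Prod.mk.injEq, sum_range_succ, sum_range_zero, pow_zero, one_mul]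
    refine ⟨by simp only [pow_succ, mul_inv_rev, mul_assoc], by ring⟩

-- The sign of `w` flips once for each `l < 2m` with `w = (y x)^l y`, and `(y x)^m = 1` makes
-- every such `l` come in a pair `l, l + m`.
theorem conjSignPerm_mul_pow_eq_one {x y : G} (hx : x * x = 1) (hy : y * y = 1) {m : ℕ}
    (hm : (x * y) ^ m = 1) : (conjSignPerm hx * conjSignPerm hy) ^ m = 1 := by
  have hm' : (y * x) ^ m = 1 := by
    rw [← inv_eq_one, ← inv_pow, mul_inv_rev, inv_eq_of_mul_eq_one_right hx,
      inv_eq_of_mul_eq_one_right hy, hm]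
  ext ⟨w, e⟩ : 1
  rw [conjSignPerm_mul_pow_apply, hm, two_mul, sum_range_add]
  simp [pow_add, hm', CharTwo.add_self_eq_zero]

end ConjSign

namespace CoxeterSystem

open scoped Classical

variable {B W : Type*} [Group W] {M : CoxeterMatrix B} (cs : CoxeterSystem M W)

local prefix:100 "s" => cs.simple
local prefix:100 "π" => cs.wordProd
local prefix:100 "ℓ" => cs.length
local prefix:100 "ris" => cs.rightInvSeq

theorem isLiftable_conjSignPerm :
    M.IsLiftable fun i => conjSignPerm (cs.simple_mul_simple_self i) := fun i i' =>
  conjSignPerm_mul_pow_eq_one _ _ (cs.simple_mul_simple_pow i i')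

noncomputable def reflSignRep : W →* Equiv.Perm (W × ZMod 2) :=
  cs.lift ⟨_, cs.isLiftable_conjSignPerm⟩

theorem reflSignRep_wordProd (ω : List B) (w : W) (e : ZMod 2) :
    cs.reflSignRep (π ω) (w, e) = (π ω * w * (π ω)⁻¹, e + (ris ω).count w) := by
  induction ω generalizing w e with
  | nil => simp [rightInvSeq]
  | cons i ω ih =>
    rw [wordProd_cons, map_mul, Equiv.Perm.mul_apply, ih, reflSignRep,
      cs.lift_apply_simple cs.isLiftable_conjSignPerm, conjSignPerm_apply, rightInvSeq,
      List.count_cons, mul_mul_inv_eq_iff_eq_inv_mul_mul]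
    simp only [Prod.mk.injEq, mul_inv_rev, mul_assoc, beq_iff_eq, eq_comm (a := w), true_and]
    split_ifs <;> push_cast <;> ring

noncomputable def reflSign (w t : W) : ZMod 2 := (cs.reflSignRep w (t, 0)).2

theorem reflSign_wordProd (ω : List B) (t : W) :
    cs.reflSign (π ω) t = (ris ω).count t := by
  simp [reflSign, reflSignRep_wordProd]

theorem reflSignRep_apply (w t : W) (e : ZMod 2) :
    cs.reflSignRep w (t, e) = (w * t * w⁻¹, e + cs.reflSign w t) := by
  obtain ⟨ω, rfl⟩ := cs.wordProd_surjective w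
  rw [reflSignRep_wordProd, reflSign_wordProd]

theorem reflSign_mul (w w' t : W) :
    cs.reflSign (w * w') t = cs.reflSign w (w' * t * w'⁻¹) + cs.reflSign w' t := by
  change (cs.reflSignRep (w * w') (t, 0)).2 = _
  rw [map_mul, Equiv.Perm.mul_apply, reflSignRep_apply, reflSignRep_apply]
  ring

theorem reflSign_simple (i : B) (t : W) : cs.reflSign (s i) t = if t = s i then 1 else 0 := by
  rw [reflSign, reflSignRep, cs.lift_apply_simple cs.isLiftable_conjSignPerm, conjSignPerm_apply,
    zero_add]

theorem reflSign_one (t : W) : cs.reflSign 1 t = 0 := by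
  simp [reflSign]

theorem IsReflection.reflSign_self {t : W} (ht : cs.IsReflection t) : cs.reflSign t t = 1 := by
  obtain ⟨u, i, rfl⟩ := ht
  have hconj : u⁻¹ * (u * s i * u⁻¹) * u⁻¹⁻¹ = s i := by group
  have hcancel := cs.reflSign_mul u u⁻¹ (u * s i * u⁻¹)
  rw [mul_inv_cancel, reflSign_one, hconj] at hcancel
  rw [cs.reflSign_mul (u * s i), hconj, cs.reflSign_mul u (s i), cs.reflSign_simple, if_pos rfl,
    show s i * s i * (s i)⁻¹ = s i by group]
  linear_combination -hcancel

theorem mem_rightInvSeq_of_reflSign_eq_one {ω : List B} {t : W} (h : cs.reflSign (π ω) t = 1) :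
    t ∈ ris ω := by
  rw [reflSign_wordProd] at h
  refine List.count_pos_iff.mp (Nat.pos_of_ne_zero fun h0 => ?_)
  simp [h0] at h

theorem reflSign_eq_one_iff {w t : W} (ht : cs.IsReflection t) :
    cs.reflSign w t = 1 ↔ ℓ (w * t) < ℓ w := by
  have descent_of_eq_one {w : W} (h : cs.reflSign w t = 1) : ℓ (w * t) < ℓ w := by
    obtain ⟨ω, hω, rfl⟩ := cs.exists_isReduced w
    exact (cs.isRightInversion_of_mem_rightInvSeq hω (cs.mem_rightInvSeq_of_reflSign_eq_one h)).2
  refine ⟨descent_of_eq_one, fun h => ?_⟩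
  by_contra hne
  have h0 : cs.reflSign w t = 0 := by
    generalize cs.reflSign w t = e at hne ⊢
    revert e; decide
  have hup : cs.reflSign (w * t) t = 1 := by
    rw [reflSign_mul, mul_inv_cancel_right, h0, ht.reflSign_self, zero_add]
  have := descent_of_eq_one hup
  rw [mul_assoc, ht.mul_self, mul_one] at this
  omega

theorem exists_wordProd_eraseIdx_eq_mul (ω : List B) {t : W} (ht : cs.IsReflection t)
    (h : ℓ (π ω * t) < ℓ (π ω)) : ∃ j < ω.length, π (ω.eraseIdx j) = π ω * t := by
  have hmem := cs.mem_rightInvSeq_of_reflSign_eq_one ((cs.reflSign_eq_one_iff ht).mpr h)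
  obtain ⟨j, hj, rfl⟩ := List.mem_iff_getElem.mp hmem
  rw [length_rightInvSeq] at hj
  refine ⟨j, hj, ?_⟩
  rw [← wordProd_mul_getD_rightInvSeq, List.getD_eq_getElem]


def subwordProds (ω : List B) : Set W := {x | ∃ τ, τ.Sublist ω ∧ π τ = x}

theorem wordProd_mem_subwordProds (ω : List B) : π ω ∈ cs.subwordProds ω :=
  ⟨ω, List.Sublist.refl ω, rfl⟩

theorem subwordProds_nil : cs.subwordProds [] = {1} := by
  ext x
  simp [subwordProds, eq_comm]

theorem mem_subwordProds_concat_iff {ω : List B} {i : B} {x : W} :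
    x ∈ cs.subwordProds (ω ++ [i]) ↔ x ∈ cs.subwordProds ω ∨ x * s i ∈ cs.subwordProds ω := by
  constructor
  · rintro ⟨τ, hτ, rfl⟩
    obtain ⟨τ', l, rfl, hτ', hl⟩ := List.sublist_append_iff.mp hτ
    rcases List.sublist_singleton.mp hl with rfl | rfl
    · exact Or.inl ⟨τ', hτ', by simp⟩
    · exact Or.inr ⟨τ', hτ', by simp [wordProd_append]⟩
  · rintro (⟨τ, hτ, rfl⟩ | ⟨τ, hτ, hx⟩)
    · exact ⟨τ, hτ.trans (List.sublist_append_left ω [i]), rfl⟩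
    · exact ⟨τ ++ [i], hτ.append (List.Sublist.refl [i]), by simp [wordProd_append, hx]⟩

theorem mul_mem_subwordProds {ω : List B} {x t : W} (hx : x ∈ cs.subwordProds ω)
    (ht : cs.IsReflection t) (h : ℓ (x * t) < ℓ x) : x * t ∈ cs.subwordProds ω := by
  obtain ⟨τ, hτ, rfl⟩ := hx
  obtain ⟨j, -, hj⟩ := cs.exists_wordProd_eraseIdx_eq_mul τ ht h
  exact ⟨τ.eraseIdx j, (τ.eraseIdx_sublist j).trans hτ, hj⟩

theorem mul_simple_mem_subwordProds_of_mem_concat {ω : List B} {i : B} {x : W}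
    (hx : x ∈ cs.subwordProds (ω ++ [i])) (h : ℓ (x * s i) < ℓ x) :
    x * s i ∈ cs.subwordProds ω := by
  rcases cs.mem_subwordProds_concat_iff.mp hx with hx | hx
  · exact cs.mul_mem_subwordProds hx (cs.isReflection_simple i) h
  · exact hx

theorem mem_subwordProds_of_mem_concat {ω : List B} {i : B} {x : W}
    (hx : x ∈ cs.subwordProds (ω ++ [i])) (h : ¬ℓ (x * s i) < ℓ x) : x ∈ cs.subwordProds ω := by
  rcases cs.mem_subwordProds_concat_iff.mp hx with hx | hx
  · exact hx
  · have hne := cs.length_mul_simple_ne x i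
    have hdesc : ℓ (x * s i * s i) < ℓ (x * s i) := by
      rw [simple_mul_simple_cancel_right]
      omega
    simpa using cs.mul_mem_subwordProds hx (cs.isReflection_simple i) hdesc

/-- The Bruhat order as defined by Björner–Brenti (Def. 2.1.1); `BruhatLE` is its subword
characterization. -/
def BruhatChain : W → W → Prop :=
  Relation.ReflTransGen fun x y => ∃ t, cs.IsReflection t ∧ x * t = y ∧ ℓ x < ℓ y

theorem bruhatChain_mul {x t : W} (ht : cs.IsReflection t) (h : ℓ x < ℓ (x * t)) :
    cs.BruhatChain x (x * t) :=
  Relation.ReflTransGen.single ⟨t, ht, rfl, h⟩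

theorem mem_subwordProds_of_bruhatChain {ω : List B} {x y : W} (h : cs.BruhatChain x y)
    (hy : y ∈ cs.subwordProds ω) : x ∈ cs.subwordProds ω := by
  induction h using Relation.ReflTransGen.head_induction_on with
  | refl => exact hy
  | head step _ ih =>
    obtain ⟨t, ht, rfl, hlt⟩ := step
    simpa [mul_assoc, ht.mul_self] using
      cs.mul_mem_subwordProds ih ht (by rwa [mul_assoc, ht.mul_self, mul_one])

theorem bruhatChain_mul_simple_of_length_lt_mul {u t : W} (ht : cs.IsReflection t)
    (hut : ℓ u < ℓ (u * t)) (i : B) :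
    cs.BruhatChain (u * s i) (u * t) ∨ cs.BruhatChain (u * s i) (u * t * s i) := by
  have hrefl : cs.IsReflection (s i * t * s i) := by simpa using ht.conj (s i)
  have hconj : u * s i * (s i * t * s i) = u * t * s i := by
    simp [mul_assoc, simple_mul_simple_cancel_left]
  have hright (hlt : ℓ (u * s i) < ℓ (u * t * s i)) :
      cs.BruhatChain (u * s i) (u * t * s i) :=
    hconj ▸ cs.bruhatChain_mul hrefl (hconj ▸ hlt)
  have hu := cs.length_mul_simple u i
  rcases cs.length_mul_simple (u * t) i with hup | hdown
  · exact Or.inr (hright (by omega))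
  -- Exchanging `t` in a reduced word for `u t` ending in `s` either deletes that `s`, and then
  -- `u s = u t`, or leaves `u s` shorter than `u t s`.
  obtain ⟨ρ, hρ, hρw⟩ := cs.exists_isReduced (u * t * s i)
  have hw : π (ρ ++ [i]) = u * t := by simp [wordProd_append, ← hρw]
  obtain ⟨j, hj, hju⟩ := cs.exists_wordProd_eraseIdx_eq_mul (ρ ++ [i]) ht
    (by rwa [hw, mul_assoc, ht.mul_self, mul_one])
  rw [hw, mul_assoc, ht.mul_self, mul_one] at hju
  rcases Nat.lt_or_ge j ρ.length with hjρ | hjρ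
  · rw [List.eraseIdx_append_of_lt_length hjρ, wordProd_append, wordProd_singleton] at hju
    refine Or.inr (hright ?_)
    rw [hρw, hρ.eq, ← hju, simple_mul_simple_cancel_right]
    have := cs.length_wordProd_le (ρ.eraseIdx j)
    rw [List.length_eraseIdx_of_lt hjρ] at this
    omega
  · have hjρ' : j = ρ.length := by simp at hj; omega
    rw [hjρ', List.eraseIdx_append_of_length_le le_rfl] at hju
    simp only [Nat.sub_self, List.eraseIdx_cons_zero, List.append_nil] at hju
    have hus : u * s i = u * t := by
      rw [← cs.simple_mul_simple_cancel_right (w := u * t) i, hρw, hju]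
    exact Or.inl (hus ▸ Relation.ReflTransGen.refl)

theorem BruhatChain.mul_simple {u w : W} (h : cs.BruhatChain u w) (i : B) :
    cs.BruhatChain (u * s i) w ∨ cs.BruhatChain (u * s i) (w * s i) := by
  induction h with
  | refl => exact Or.inr Relation.ReflTransGen.refl
  | tail _ step ih =>
    obtain ⟨t, ht, rfl, hlt⟩ := step
    rcases ih with h | h
    · exact Or.inl (h.trans (cs.bruhatChain_mul ht hlt))
    · exact (cs.bruhatChain_mul_simple_of_length_lt_mul ht hlt i).imp h.trans h.trans

theorem bruhatChain_of_mem_subwordProds {ω : List B} (hω : cs.IsReduced ω) {x : W}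
    (hx : x ∈ cs.subwordProds ω) : cs.BruhatChain x (π ω) := by
  induction ω using List.reverseRecOn generalizing x with
  | nil =>
    rw [subwordProds_nil, Set.mem_singleton_iff] at hx
    exact hx ▸ Relation.ReflTransGen.refl
  | append_singleton ρ i ih =>
    have hρ : cs.IsReduced ρ := by simpa using hω.take ρ.length
    have hup : ℓ (π ρ) < ℓ (π ρ * s i) := by
      have := hω.eq
      simp only [wordProd_append, wordProd_singleton, List.length_append, List.length_singleton,
        ← hρ.eq] at this
      omega
    have hstep := cs.bruhatChain_mul (cs.isReflection_simple i) hup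
    rw [wordProd_append, wordProd_singleton]
    rcases cs.mem_subwordProds_concat_iff.mp hx with hx | hx
    · exact (ih hρ hx).trans hstep
    · have h := BruhatChain.mul_simple cs (ih hρ hx) i
      rw [simple_mul_simple_cancel_right] at h
      exact h.elim (·.trans hstep) id

theorem mem_subwordProds_of_bruhatLE {v w : W} (h : BruhatLE cs v w) {ω : List B}
    (hω : π ω = w) : v ∈ cs.subwordProds ω := by
  obtain ⟨ω₀, hω₀, rfl, τ, hτ, -, rfl⟩ := h
  exact cs.mem_subwordProds_of_bruhatChain
    (cs.bruhatChain_of_mem_subwordProds hω₀ ⟨τ, hτ, rfl⟩) (hω ▸ cs.wordProd_mem_subwordProds ω)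

end CoxeterSystem

theorem eq_prod_take_ofFn_of_succ_eq_mul {G : Type*} [Monoid G] {n : ℕ} (u : ℕ → G)
    (t : Fin n → G) (h0 : u 0 = 1) (hsucc : ∀ j : Fin n, u (j + 1) = u j * t j) {k : ℕ}
    (hk : k ≤ n) : u k = ((List.ofFn t).take k).prod := by
  induction k with
  | zero => simpa using h0
  | succ k ih =>
    rw [hsucc ⟨k, hk⟩, ih (by omega), List.prod_take_succ _ _ (by simpa using hk),
      List.getElem_ofFn]

theorem greedy_positive_distinguished_subexpression_general
    {B W : Type*} [Group W] {M : CoxeterMatrix B} (cs : CoxeterSystem M W)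
    (v w : W) (ω : List B) (hw : cs.wordProd ω = w)
    (hle : BruhatLE cs v w)
    (u : ℕ → W) (t : Fin ω.length → W)
    (hun : u ω.length = v)
    (hgreedy : ∀ j : Fin ω.length,
      (cs.length (u ((j : ℕ) + 1) * cs.simple (ω.get j)) < cs.length (u ((j : ℕ) + 1)) →
        t j = cs.simple (ω.get j) ∧ u (j : ℕ) = u ((j : ℕ) + 1) * (cs.simple (ω.get j))⁻¹) ∧
      (¬ cs.length (u ((j : ℕ) + 1) * cs.simple (ω.get j)) < cs.length (u ((j : ℕ) + 1)) →
        t j = 1 ∧ u (j : ℕ) = u ((j : ℕ) + 1))) :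
    (∀ k : ℕ, k ≤ ω.length → u k = ((List.ofFn t).take k).prod) ∧
    (List.ofFn t).prod = v ∧
    ∀ j : Fin ω.length,
      cs.length (u (j : ℕ)) < cs.length (u (j : ℕ) * cs.simple (ω.get j)) := by
  have greedy_step (j : Fin ω.length) :
      u (j + 1) = u j * t j ∧ cs.length (u j) < cs.length (u j * cs.simple (ω.get j)) ∧
        (u (j + 1) ∈ cs.subwordProds (ω.take (j + 1)) → u j ∈ cs.subwordProds (ω.take j)) := by
    rw [← List.take_append_getElem j.isLt, ← List.get_eq_getElem]
    by_cases hd : cs.length (u (j + 1) * cs.simple (ω.get j)) < cs.length (u (j + 1))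
    · obtain ⟨htj, hu⟩ := (hgreedy j).1 hd
      rw [cs.inv_simple] at hu
      refine ⟨by rw [htj, hu, cs.simple_mul_simple_cancel_right], ?_, fun h => ?_⟩
      · rwa [hu, cs.simple_mul_simple_cancel_right]
      · exact hu ▸ cs.mul_simple_mem_subwordProds_of_mem_concat h hd
    · obtain ⟨htj, hu⟩ := (hgreedy j).2 hd
      refine ⟨by rw [htj, hu, mul_one], ?_, fun h => hu ▸ cs.mem_subwordProds_of_mem_concat h hd⟩
      have := cs.length_mul_simple_ne (u (j + 1)) (ω.get j)
      rw [hu]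
      omega
  have hmem {k : ℕ} (hk : k ≤ ω.length) : u k ∈ cs.subwordProds (ω.take k) :=
    Nat.decreasingInduction (fun j hj => (greedy_step ⟨j, hj⟩).2.2)
      (by simpa [hun] using cs.mem_subwordProds_of_bruhatLE hle hw) hk
  have hu0 : u 0 = 1 := by simpa [CoxeterSystem.subwordProds_nil] using hmem (Nat.zero_le _)
  have hprefix {k : ℕ} (hk : k ≤ ω.length) : u k = ((List.ofFn t).take k).prod :=
    eq_prod_take_ofFn_of_succ_eq_mul u t hu0 (fun j => (greedy_step j).1) hk
  refine ⟨fun k hk => hprefix hk, ?_, fun j => (greedy_step j).2.1⟩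
  rw [← hun, hprefix le_rfl, List.take_of_length_le (by simp)]

/-- The unique positive distinguished subexpression for `v ≤ w` inside a reduced word
`ω = s_{i_1} ⋯ s_{i_n}` for `w` can be constructed greedily from the right: starting with
`v_{(n)} = v`, set `t_j = s_{i_j}` if `v_{(j)} s_{i_j} < v_{(j)}` (in Bruhat order, i.e.
the length decreases) and `t_j = 1` otherwise, and put `v_{(j-1)} = v_{(j)} t_j⁻¹`.
Then the `v_{(j)}` are exactly the partial products of the subexpression `t`, the
product of the `t_j` is `v`, and `t` is positive distinguished:
`v_{(j-1)} < v_{(j-1)} s_{i_j}` for all `j`. -/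
theorem greedy_positive_distinguished_subexpression
    {B W : Type*} [Group W] {M : CoxeterMatrix B} (cs : CoxeterSystem M W)
    (v w : W) (ω : List B) (hred : cs.IsReduced ω) (hw : cs.wordProd ω = w)
    (hle : BruhatLE cs v w)
    (u : ℕ → W) (t : Fin ω.length → W)
    (hun : u ω.length = v)
    (hgreedy : ∀ j : Fin ω.length,
      (cs.length (u ((j : ℕ) + 1) * cs.simple (ω.get j)) < cs.length (u ((j : ℕ) + 1)) →
        t j = cs.simple (ω.get j) ∧ u (j : ℕ) = u ((j : ℕ) + 1) * (cs.simple (ω.get j))⁻¹) ∧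
      (¬ cs.length (u ((j : ℕ) + 1) * cs.simple (ω.get j)) < cs.length (u ((j : ℕ) + 1)) →
        t j = 1 ∧ u (j : ℕ) = u ((j : ℕ) + 1))) :
    (∀ k : ℕ, k ≤ ω.length → u k = ((List.ofFn t).take k).prod) ∧
    (List.ofFn t).prod = v ∧
    ∀ j : Fin ω.length,
      cs.length (u (j : ℕ)) < cs.length (u (j : ℕ) * cs.simple (ω.get j)) :=
  greedy_positive_distinguished_subexpression_general cs v w ω hw hle u t hun hgreedy
end

section
/- The number b̂_n of type (B_n,1) Le-diagrams of maximal shape satisfies the generating function identity Σ_{n≥0} b̂_n x^n = (1-2x)/(1-4x+2x^2). -/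
attribute [local instance] Classical.propDecidable

/-- A type `(B_n,1)` Le-diagram of maximal shape (see the paper): a filling of `2n-1` boxes
by `0`/`+` (`true` = `+`) such that if a `0` occurs in a position strictly right of the
middle, then the box immediately to its left and its conjugate do not both contain `+`. -/
def IsLeB1 (n : ℕ) (f : Fin (2 * n - 1) → Bool) : Prop :=
  ∀ j : ℕ, ∀ hj : j < 2 * n - 1, ∀ _hn : n ≤ j, f ⟨j, hj⟩ = false →
    ¬ (f ⟨j - 1, by omega⟩ = true ∧ f ⟨2 * n - 1 - j, by omega⟩ = true)

/-- The number of type `(B_n,1)` Le-diagrams of maximal shape. -/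
noncomputable def bhatNum (n : ℕ) : ℕ :=
  (Finset.univ.filter (IsLeB1 n)).card

/-!
Stripping the first and the last box of a diagram of size `n + 2` leaves a diagram of size
`n + 1`. The first box is never constrained, and the last one only when it holds a `0`: then the
remaining diagram must not carry `+` at both of its ends. Diagrams of size `n + 1` with `+` at both
ends are in turn those of size `n` with two `+` boxes added around them, so
`b̂ (n + 2) = 2 * (2 * b̂ (n + 1) - b̂ n)`. Together with `b̂ 0 = 1` and `b̂ 1 = 2` this linear
recurrence is the generating function identity.
-/

open Finset PowerSeries

theorem PowerSeries.mk_mul_eq_of_recurrence {R : Type*} [CommRing R] (a : ℕ → R) (p q : R)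
    (h : ∀ n, a (n + 2) = p * a (n + 1) + q * a n) :
    mk a * (1 - C p * X - C q * X ^ 2) = C (a 0) + C (a 1 - p * a 0) * X := by
  rw [show mk a * (1 - C p * X - C q * X ^ 2) = mk a - C p * (mk a * X) - C q * (mk a * X ^ 2)
    by ring]
  ext (_ | _ | n)
  · simp
  · simp [coeff_succ_mul_X, coeff_mul_X_pow']
  · simp [coeff_succ_mul_X, coeff_mul_X_pow', h]

theorem Fin.sum_cons_snoc {α M : Type*} [Fintype α] [AddCommMonoid M] {N : ℕ}
    (φ : (Fin (N + 2) → α) → M) :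
    ∑ f, φ f = ∑ b, ∑ x, ∑ g : Fin N → α, φ (Fin.cons b (Fin.snoc g x)) := by
  rw [← ((Equiv.prodCongr (Equiv.refl α) (Fin.snocEquiv fun _ => α)).trans
    (Fin.consEquiv fun _ => α)).sum_comp, Fintype.sum_prod_type]
  simp only [Fintype.sum_prod_type]
  rfl

/-- A filling read along `ℕ`, with `0` outside its boxes: this moves all index arithmetic of
`IsLeB1` from `Fin` to `ℕ`. -/
def cell {N : ℕ} (f : Fin N → Bool) (j : ℕ) : Bool :=
  if h : j < N then f ⟨j, h⟩ else false

@[simp]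
theorem cell_of_lt {N : ℕ} (f : Fin N → Bool) {j : ℕ} (h : j < N) : cell f j = f ⟨j, h⟩ :=
  dif_pos h

theorem cell_cons {N : ℕ} (b : Bool) (g : Fin N → Bool) (j : ℕ) :
    cell (Fin.cons b g : Fin (N + 1) → Bool) j = if j = 0 then b else cell g (j - 1) := by
  rcases j with _ | j
  · simp
  · rw [if_neg j.succ_ne_zero, Nat.add_sub_cancel]
    by_cases h : j < N
    · rw [cell_of_lt _ (by omega), cell_of_lt _ h]
      exact Fin.cons_succ (α := fun _ => Bool) b g ⟨j, h⟩
    · simp [cell, h]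

theorem cell_snoc {N : ℕ} (g : Fin N → Bool) (x : Bool) (j : ℕ) :
    cell (Fin.snoc g x : Fin (N + 1) → Bool) j = if j = N then x else cell g j := by
  rcases lt_trichotomy j N with h | rfl | h
  · rw [if_neg h.ne, cell_of_lt _ (by omega), cell_of_lt _ h]
    exact Fin.snoc_castSucc (α := fun _ => Bool) x g ⟨j, h⟩
  · rw [if_pos rfl, cell_of_lt _ (by omega)]
    exact Fin.snoc_last (α := fun _ => Bool) x g
  · simp [cell, h.ne', h.not_gt, show ¬ j < N + 1 by omega]

theorem cell_cons_snoc {N : ℕ} (b x : Bool) (g : Fin N → Bool) (j : ℕ) :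
    cell (Fin.cons b (Fin.snoc g x) : Fin (N + 1 + 1) → Bool) j =
      if j = 0 then b else if j = N + 1 then x else cell g (j - 1) := by
  rw [cell_cons, cell_snoc]
  rcases j with _ | j <;> simp

def IsLeB1Seq (n : ℕ) (F : ℕ → Bool) : Prop :=
  ∀ j, n ≤ j → j < 2 * n - 1 → F j = false →
    ¬ (F (j - 1) = true ∧ F (2 * n - 1 - j) = true)

theorem isLeB1_iff_isLeB1Seq_cell (n : ℕ) (f : Fin (2 * n - 1) → Bool) :
    IsLeB1 n f ↔ IsLeB1Seq n (cell f) := by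
  refine forall_congr' fun j => ⟨fun h hn hj => ?_, fun h hj hn => ?_⟩
  · simpa [hj, show j - 1 < 2 * n - 1 by omega, show 2 * n - 1 - j < 2 * n - 1 by omega]
      using h hj hn
  · simpa [hj, show j - 1 < 2 * n - 1 by omega, show 2 * n - 1 - j < 2 * n - 1 by omega]
      using h hn hj

theorem isLeB1_of_le_one {n : ℕ} (hn : n ≤ 1) (f : Fin (2 * n - 1) → Bool) : IsLeB1 n f :=
  fun _ _ _ => by omega

/-- The conditions at positions `n + 2, …, 2n + 1` are those of size `n + 1` shifted by one, and
the last position `2n + 2` is the conjugate of position `1`. -/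
theorem isLeB1Seq_add_two_iff (n : ℕ) (F G : ℕ → Bool)
    (hFG : ∀ i < 2 * n + 1, F (i + 1) = G i) :
    IsLeB1Seq (n + 2) F ↔
      IsLeB1Seq (n + 1) G ∧ (F (2 * n + 2) = false → ¬ (G (2 * n) = true ∧ G 0 = true)) := by
  have hmid : ∀ j, n + 1 ≤ j → j < 2 * n + 1 →
      ((F (j + 1) = false →
          ¬ (F (j + 1 - 1) = true ∧ F (2 * (n + 2) - 1 - (j + 1)) = true)) ↔
        (G j = false → ¬ (G (j - 1) = true ∧ G (2 * (n + 1) - 1 - j) = true))) := by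
    intro j h1 h2
    rw [show j + 1 - 1 = j - 1 + 1 by omega,
      show 2 * (n + 2) - 1 - (j + 1) = 2 * (n + 1) - 1 - j + 1 by omega,
      hFG j h2, hFG (j - 1) (by omega), hFG _ (by omega)]
  have hlast : F (2 * n + 2 - 1) = G (2 * n) ∧ F (2 * (n + 2) - 1 - (2 * n + 2)) = G 0 :=
    ⟨hFG (2 * n) (by omega),
      by rw [show 2 * (n + 2) - 1 - (2 * n + 2) = 0 + 1 by omega, hFG 0 (by omega)]⟩
  constructor
  · intro H
    refine ⟨fun j h1 h2 => (hmid j h1 h2).mp (H (j + 1) (by omega) (by omega)), ?_⟩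
    simpa only [hlast] using H (2 * n + 2) (by omega) (by omega)
  · rintro ⟨H, Hlast⟩ j h1 h2
    obtain rfl | hj := eq_or_ne j (2 * n + 2)
    · simpa only [hlast] using Hlast
    · obtain ⟨i, rfl⟩ : ∃ i, j = i + 1 := ⟨j - 1, by omega⟩
      exact (hmid i (by omega) (by omega)).mpr (H i (by omega) (by omega))

theorem isLeB1_cons_snoc (n : ℕ) (b x : Bool) (g : Fin (2 * (n + 1) - 1) → Bool) :
    IsLeB1 (n + 2) (Fin.cons b (Fin.snoc g x)) ↔
      IsLeB1 (n + 1) g ∧ (x = false → ¬ (cell g (2 * n) = true ∧ cell g 0 = true)) := by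
  have hmid : ∀ i < 2 * n + 1,
      cell (Fin.cons b (Fin.snoc g x) : Fin (2 * (n + 1) - 1 + 1 + 1) → Bool) (i + 1) =
        cell g i := fun i hi => by
    rw [cell_cons_snoc, if_neg i.succ_ne_zero, if_neg (by omega), Nat.add_sub_cancel]
  have hlast :
      cell (Fin.cons b (Fin.snoc g x) : Fin (2 * (n + 1) - 1 + 1 + 1) → Bool) (2 * n + 2) =
        x := by
    rw [cell_cons_snoc, if_neg (by omega), if_pos (by omega)]
  rw [isLeB1_iff_isLeB1Seq_cell, isLeB1_iff_isLeB1Seq_cell, isLeB1Seq_add_two_iff n _ _ hmid,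
    hlast]

/-- The number of diagrams of size `n + 1` with `+` in the first and in the last box. -/
noncomputable def bhatNumPlusEnds (n : ℕ) : ℕ :=
  #{g : Fin (2 * (n + 1) - 1) → Bool |
    IsLeB1 (n + 1) g ∧ cell g (2 * n) = true ∧ cell g 0 = true}

theorem bhatNum_eq_sum (n : ℕ) :
    bhatNum n = ∑ f : Fin (2 * n - 1) → Bool, if IsLeB1 n f then 1 else 0 :=
  card_filter _ _

theorem bhatNum_zero : bhatNum 0 = 1 := by
  simp [bhatNum, isLeB1_of_le_one]

theorem bhatNum_one : bhatNum 1 = 2 := by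
  simp [bhatNum, isLeB1_of_le_one]

theorem bhatNum_add_two_add_two_mul_bhatNumPlusEnds (n : ℕ) :
    bhatNum (n + 2) + 2 * bhatNumPlusEnds n = 4 * bhatNum (n + 1) := by
  rw [bhatNum_eq_sum, bhatNum_eq_sum, bhatNumPlusEnds, card_filter]
  refine (congrArg (· + _) (Fin.sum_cons_snoc (N := 2 * (n + 1) - 1) _)).trans ?_
  simp only [isLeB1_cons_snoc, Fintype.sum_bool, mul_sum, ← sum_add_distrib]
  refine sum_congr rfl fun g _ => ?_
  by_cases hL : IsLeB1 (n + 1) g <;> by_cases hC : cell g (2 * n) = true ∧ cell g 0 = true <;>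
    simp [hL, hC]

theorem bhatNumPlusEnds_eq_bhatNum (n : ℕ) : bhatNumPlusEnds n = bhatNum n := by
  rcases n with _ | n
  · rw [bhatNumPlusEnds, bhatNum_zero, card_eq_one]
    refine ⟨fun _ => true, ext fun g => ?_⟩
    simp [isLeB1_of_le_one, funext_iff, Fin.forall_fin_one]
  · rw [bhatNumPlusEnds, card_filter, bhatNum_eq_sum]
    refine (Fin.sum_cons_snoc (N := 2 * (n + 1) - 1) _).trans ?_
    have hlast : (2 * (n + 1) = 2 * (n + 1) - 1 + 1) = True := eq_true (by omega)
    simp [isLeB1_cons_snoc, cell_cons_snoc, hlast]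

theorem bhatNum_add_two (n : ℕ) : bhatNum (n + 2) + 2 * bhatNum n = 4 * bhatNum (n + 1) := by
  rw [← bhatNumPlusEnds_eq_bhatNum n, bhatNum_add_two_add_two_mul_bhatNumPlusEnds]

/-- The generating function identity `Σ b̂_n xⁿ = (1-2x)/(1-4x+2x²)`. -/
theorem bhatNum_generating_function :
    (PowerSeries.mk fun n => (bhatNum n : ℚ)) *
        (1 - 4 * PowerSeries.X + 2 * PowerSeries.X ^ 2) =
      1 - 2 * PowerSeries.X := by
  have hrec (n : ℕ) : (bhatNum (n + 2) : ℚ) = 4 * bhatNum (n + 1) + -2 * bhatNum n := by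
    have h : (bhatNum (n + 2) + 2 * bhatNum n : ℚ) = 4 * bhatNum (n + 1) := by
      exact_mod_cast bhatNum_add_two n
    linear_combination h
  convert PowerSeries.mk_mul_eq_of_recurrence (fun n => (bhatNum n : ℚ)) _ _ hrec using 1
  · simp [map_ofNat]
  · simp [bhatNum_zero, bhatNum_one, map_ofNat]
    ring
end
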